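/- Sup-norm of a uniform spherical vector tends to zero: for every fixed c > 0, if Y⁽ⁿ⁾ = (Y₁⁽ⁿ⁾,…,Yₙ⁽ⁿ⁾) is uniformly distributed on the Euclidean unit sphere S^{n-1} ⊂ ℝⁿ, then lim_{n→∞} P[max{|Y₁⁽ⁿ⁾|,…,|Yₙ⁽ⁿ⁾|} < c] = 1; equivalently, ‖Y⁽ⁿ⁾‖_∞ → 0 in probability as n → ∞. -/

import Mathlib

open MeasureTheory ProbabilityTheory Filter Metric
open scoped ENNReal NNReal Topology

noncomputable section

/-- The uniform probability measure on `[-1, 1]`. -/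
def uniformPM : Measure ℝ := (2⁻¹ : ℝ≥0∞) • (volume.restrict (Set.Icc (-1 : ℝ) 1))

instance : IsProbabilityMeasure uniformPM := by
  constructor
  rw [uniformPM, Measure.smul_apply, Measure.restrict_apply_univ, Real.volume_Icc]
  rw [show ((1 : ℝ) - (-1)) = 2 by norm_num]
  rw [ENNReal.ofReal_ofNat, smul_eq_mul, ENNReal.inv_mul_cancel] <;> simp

/-- The uniform probability measure on the unit sphere of `ℝⁿ`. -/
def sphereUniform (n : ℕ) : Measure (sphere (0 : EuclideanSpace ℝ (Fin n)) 1) :=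
  ((volume : Measure (EuclideanSpace ℝ (Fin n))).toSphere Set.univ)⁻¹ •
    (volume : Measure (EuclideanSpace ℝ (Fin n))).toSphere

/-- The projection `μ_θ` of the uniform distribution on the cube `[-1,1]ⁿ` to the line
spanned by `θ`, as a probability measure on `ℝ`. -/
def cubeProjPM (n : ℕ) (θ : EuclideanSpace ℝ (Fin n)) : ProbabilityMeasure ℝ :=
  ⟨Measure.map (fun u : Fin n → ℝ => ∑ i, u i * θ i) (Measure.pi fun _ : Fin n => uniformPM),
    Measure.isProbabilityMeasure_map (Measurable.aemeasurable (by fun_prop))⟩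

/-- The set `W` of non-increasing sequences of non-negative reals with `ℓ²`-norm at most 1. -/
def Wset : Set (ℕ → ℝ) :=
  {α | (∀ k, 0 ≤ α k) ∧ Antitone α ∧ Summable (fun k => α k ^ 2) ∧ ∑' k, α k ^ 2 ≤ 1}

/-- `IsLawNu α μ` says that `μ` is the law of
`√(1-‖α‖₂²) Z/√3 + ∑ₖ αₖ Uₖ` where `Z` is standard Gaussian, the `Uₖ` are i.i.d. uniform
on `[-1,1]`, and `Z, U₀, U₁, …` are independent. -/
def IsLawNu (α : ℕ → ℝ) (μ : Measure ℝ) : Prop :=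
  ∃ (Ω : Type) (_ : MeasurableSpace Ω) (P : Measure Ω) (Z : Ω → ℝ) (U : ℕ → Ω → ℝ),
    IsProbabilityMeasure P ∧
    Measure.map Z P = gaussianReal 0 1 ∧
    (∀ k, Measure.map (U k) P = uniformPM) ∧
    iIndepFun (fun i : ℕ => if i = 0 then Z else U (i - 1)) P ∧
    μ = Measure.map (fun ω => Real.sqrt (1 - ∑' k, α k ^ 2) * Z ω / Real.sqrt 3
        + ∑' k, α k * U k ω) P

/-- The rate function `I` of Theorem A. -/
def rateI (ν : ProbabilityMeasure ℝ) : ℝ≥0∞ :=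
  sInf {c | ∃ α ∈ Wset, (∑' k, α k ^ 2) < 1 ∧ IsLawNu α ν.toMeasure ∧
    c = ENNReal.ofReal (-(1 / 2) * Real.log (1 - ∑' k, α k ^ 2))}


/-- The Rademacher (symmetric Bernoulli) probability measure on `ℝ`. -/
def rademacherPM : Measure ℝ := (2⁻¹ : ℝ≥0∞) • (Measure.dirac (-1) + Measure.dirac 1)

instance : IsProbabilityMeasure rademacherPM := by
  constructor
  simp [rademacherPM]
  exact ENNReal.inv_two_add_inv_two

/-- The projection `μ_θ^discr` of the uniform distribution on the discrete cube `{-1,1}ⁿ`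
to the line spanned by `θ`, as a probability measure on `ℝ`. -/
def discreteCubeProjPM (n : ℕ) (θ : EuclideanSpace ℝ (Fin n)) : ProbabilityMeasure ℝ :=
  ⟨Measure.map (fun u : Fin n → ℝ => ∑ i, u i * θ i) (Measure.pi fun _ : Fin n => rademacherPM),
    Measure.isProbabilityMeasure_map (Measurable.aemeasurable (by fun_prop))⟩

/-- `IsLawNuDiscr α μ` says that `μ` is the law of `√(1-‖α‖₂²) Z + ∑ₖ αₖ Vₖ` where `Z` is
standard Gaussian, the `Vₖ` are i.i.d. Rademacher, and `Z, V₀, V₁, …` are independent. -/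
def IsLawNuDiscr (α : ℕ → ℝ) (μ : Measure ℝ) : Prop :=
  ∃ (Ω : Type) (_ : MeasurableSpace Ω) (P : Measure Ω) (Z : Ω → ℝ) (V : ℕ → Ω → ℝ),
    IsProbabilityMeasure P ∧
    Measure.map Z P = gaussianReal 0 1 ∧
    (∀ k, Measure.map (V k) P = rademacherPM) ∧
    iIndepFun (fun i : ℕ => if i = 0 then Z else V (i - 1)) P ∧
    μ = Measure.map (fun ω => Real.sqrt (1 - ∑' k, α k ^ 2) * Z ω
        + ∑' k, α k * V k ω) P

/-- The rate function `I^discr` of Theorem B. -/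
def rateIdiscr (ν : ProbabilityMeasure ℝ) : ℝ≥0∞ :=
  sInf {c | ∃ α ∈ Wset, (∑' k, α k ^ 2) < 1 ∧ IsLawNuDiscr α ν.toMeasure ∧
    c = ENNReal.ofReal (-(1 / 2) * Real.log (1 - ∑' k, α k ^ 2))}

/-- The rate function `J(α) = -½ log (1 - ‖α‖₂²)` on `W` (with value `∞` when `‖α‖₂ = 1`). -/
def rateJ (α : ℕ → ℝ) : ℝ≥0∞ :=
  if (∑' k, α k ^ 2) < 1 then ENNReal.ofReal (-(1 / 2) * Real.log (1 - ∑' k, α k ^ 2)) else ⊤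

/-- The decreasing order statistics of the absolute values of the coordinates of `y`. -/
def ordStat {n : ℕ} (y : Fin n → ℝ) : Fin n → ℝ :=
  fun k => |y (Tuple.sort (fun i => -|y i|) k)|

/-- The random element `η_n` of `W`: the decreasing order statistics of the absolute values of
the coordinates of a point of the sphere, padded by zeros. -/
def eta {n : ℕ} (θ : sphere (0 : EuclideanSpace ℝ (Fin n)) 1) : ℕ → ℝ :=
  fun k => if h : k < n then ordStat (fun i => (θ : EuclideanSpace ℝ (Fin n)) i) ⟨k, h⟩ else 0

/-- `sinc x = sin x / x` (with `sinc 0 = 1`). -/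
def rsinc (x : ℝ) : ℝ := if x = 0 then 1 else Real.sin x / x


/-! The uniform measure of a set of directions is the volume of the cone it spans inside the unit
ball, divided by the volume of the ball. In the part of the unit ball of `ℝᵐ⁺¹` where
`|xᵢ| ≥ c ‖x‖`, the other `m` coordinates have norm at most `√(1 - c²)`, so this part has volume at
most `2 (1 - c²)^(m/2) κₘ`, where `κₘ` is the volume of the unit ball of `ℝᵐ`. The ball itself
contains the cylinder `|x₀| ≤ c/2`, `‖(x₁, …, xₘ)‖ ≤ √(1 - c²/4)` of volume `c (1 - c²/4)^(m/2) κₘ`.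
A union bound over the `m + 1` coordinates gives
`P(‖θ‖_∞ ≥ c) ≤ (2 / c) (m + 1) qᵐ` with `q = √((1 - c²) / (1 - c²/4)) < 1`. -/

open Set
open scoped Pointwise

namespace EuclideanSpace

variable {ι : Type*} [Fintype ι] {m : ℕ}

def coordCone (i : ι) (c : ℝ) : Set (EuclideanSpace ℝ ι) := {x | c * ‖x‖ ≤ |x i|}

def splitCoord (i : Fin (m + 1)) (x : EuclideanSpace ℝ (Fin (m + 1))) :
    ℝ × EuclideanSpace ℝ (Fin m) :=
  (x i, WithLp.toLp 2 (Fin.removeNth i x.ofLp))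

theorem measurePreserving_splitCoord (i : Fin (m + 1)) :
    MeasurePreserving (splitCoord i) volume (volume.prod volume) :=
  ((MeasurePreserving.id volume).prod (PiLp.volume_preserving_toLp (Fin m))).comp
    ((measurePreserving_piFinSuccAbove (fun _ => volume) i).comp (PiLp.volume_preserving_ofLp _))

theorem norm_sq_eq_sq_add_norm_sq_splitCoord (i : Fin (m + 1))
    (x : EuclideanSpace ℝ (Fin (m + 1))) :
    ‖x‖ ^ 2 = x i ^ 2 + ‖(splitCoord i x).2‖ ^ 2 := by
  simp only [EuclideanSpace.norm_sq_eq, Real.norm_eq_abs, sq_abs, splitCoord]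
  exact Fin.sum_univ_succAbove _ i

theorem volume_preimage_splitCoord (i : Fin (m + 1)) (a : ℝ) {r : ℝ} (hr : 0 ≤ r) :
    volume (splitCoord i ⁻¹' (Icc (-a) a ×ˢ closedBall 0 r)) =
      ENNReal.ofReal (2 * a) * ENNReal.ofReal (r ^ m) *
        volume (ball (0 : EuclideanSpace ℝ (Fin m)) 1) := by
  rw [(measurePreserving_splitCoord i).measure_preimage
    (measurableSet_Icc.prod measurableSet_closedBall).nullMeasurableSet, Measure.prod_prod,
    Real.volume_Icc, Measure.addHaar_closedBall _ _ hr, finrank_euclideanSpace_fin, mul_assoc]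
  ring_nf

theorem volume_closedBall_inter_coordCone_le (i : Fin (m + 1)) {c : ℝ} (hc₀ : 0 ≤ c)
    (hc₁ : c ≤ 1) :
    volume (closedBall 0 1 ∩ coordCone i c) ≤
      ENNReal.ofReal 2 * ENNReal.ofReal (√(1 - c ^ 2) ^ m) *
        volume (ball (0 : EuclideanSpace ℝ (Fin m)) 1) := by
  rw [show (2 : ℝ) = 2 * 1 by ring, ← volume_preimage_splitCoord i 1 (Real.sqrt_nonneg _)]
  refine measure_mono fun x ⟨hx, hcx⟩ => ⟨?_, ?_⟩
  · rw [mem_closedBall_zero_iff] at hx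
    exact abs_le.1 ((PiLp.norm_apply_le x i).trans hx)
  · rw [mem_closedBall_zero_iff] at hx ⊢
    have hsq : (c * ‖x‖) ^ 2 ≤ x i ^ 2 := by
      rw [← sq_abs (x i)]
      exact pow_le_pow_left₀ (by positivity) hcx 2
    have hx2 : ‖x‖ ^ 2 ≤ 1 := pow_le_one₀ (norm_nonneg x) hx
    apply Real.le_sqrt_of_sq_le
    nlinarith [norm_sq_eq_sq_add_norm_sq_splitCoord i x,
      mul_nonneg (sub_nonneg.2 hx2) (sub_nonneg.2 (pow_le_one₀ hc₀ hc₁ (n := 2)))]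

theorem volume_preimage_splitCoord_le_volume_ball (i : Fin (m + 1)) {δ : ℝ} (hδ : δ ≤ 1) :
    ENNReal.ofReal (2 * δ) * ENNReal.ofReal (√(1 - δ ^ 2) ^ m) *
        volume (ball (0 : EuclideanSpace ℝ (Fin m)) 1) ≤
      volume (ball (0 : EuclideanSpace ℝ (Fin (m + 1))) 1) := by
  rw [← volume_preimage_splitCoord i δ (Real.sqrt_nonneg _),
    ← Measure.addHaar_closedBall_eq_addHaar_ball]
  refine measure_mono fun x ⟨hxi, hx⟩ => ?_
  rw [mem_closedBall_zero_iff] at hx ⊢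
  have hδ₀ : 0 ≤ δ := by linarith [hxi.1, hxi.2]
  have hrest := Real.sq_sqrt (show 0 ≤ 1 - δ ^ 2 by nlinarith) ▸
    pow_le_pow_left₀ (norm_nonneg _) hx 2
  have hxi2 : x i ^ 2 ≤ δ ^ 2 := sq_le_sq' hxi.1 hxi.2
  nlinarith [norm_sq_eq_sq_add_norm_sq_splitCoord i x, norm_nonneg x]

end EuclideanSpace

open EuclideanSpace

variable {n m : ℕ}

instance [NeZero n] : IsProbabilityMeasure (sphereUniform n) :=
  ⟨by rw [sphereUniform, Measure.smul_apply, smul_eq_mul,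
    ENNReal.inv_mul_cancel (Measure.measure_univ_ne_zero.2 (Measure.toSphere_ne_zero _))
      (measure_ne_top _ _)]⟩

theorem sphereUniform_apply [NeZero n] {s : Set (sphere (0 : EuclideanSpace ℝ (Fin n)) 1)}
    (hs : MeasurableSet s) :
    sphereUniform n s =
      volume (Ioo (0 : ℝ) 1 • (Subtype.val '' s)) /
        volume (ball (0 : EuclideanSpace ℝ (Fin n)) 1) := by
  rw [sphereUniform, Measure.smul_apply, smul_eq_mul, Measure.toSphere_apply' _ hs,
    Measure.toSphere_apply_univ, mul_comm, ← div_eq_mul_inv,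
    ENNReal.mul_div_mul_left _ _ (by simp [NeZero.ne n]) (ENNReal.natCast_ne_top _)]

theorem measurableSet_exists_le_abs_coord (c : ℝ) :
    MeasurableSet {θ : sphere (0 : EuclideanSpace ℝ (Fin n)) 1 |
      ∃ i, c ≤ |(θ : EuclideanSpace ℝ (Fin n)) i|} := by
  simp only [ofPred_exists]
  exact MeasurableSet.iUnion fun i => measurableSet_le measurable_const (by fun_prop)

theorem Ioo_smul_exists_le_abs_coord_subset (c : ℝ) :
    Ioo (0 : ℝ) 1 • (Subtype.val '' {θ : sphere (0 : EuclideanSpace ℝ (Fin n)) 1 |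
      ∃ i, c ≤ |(θ : EuclideanSpace ℝ (Fin n)) i|}) ⊆
      ⋃ i, closedBall 0 1 ∩ coordCone i c := by
  rintro _ ⟨r, ⟨hr₀, hr₁⟩, _, ⟨θ, ⟨i, hi⟩, rfl⟩, rfl⟩
  have hnorm : ‖r • (θ : EuclideanSpace ℝ (Fin n))‖ = r := by
    rw [norm_smul, norm_eq_of_mem_sphere θ, mul_one, Real.norm_of_nonneg hr₀.le]
  refine mem_iUnion.2 ⟨i, mem_closedBall_zero_iff.2 (hnorm.trans_le hr₁.le), ?_⟩
  simp only [coordCone, mem_ofPred_eq, hnorm, PiLp.smul_apply, smul_eq_mul, abs_mul,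
    abs_of_pos hr₀]
  rw [mul_comm]
  exact mul_le_mul_of_nonneg_left hi hr₀.le

theorem sphereUniform_exists_le_abs_coord_le {c : ℝ} (hc₀ : 0 < c) (hc₁ : c ≤ 1) :
    sphereUniform (m + 1) {θ | ∃ i, c ≤ |(θ : EuclideanSpace ℝ (Fin (m + 1))) i|} ≤
      ENNReal.ofReal (2 / c * ((m + 1) * (√(1 - c ^ 2) / √(1 - (c / 2) ^ 2)) ^ m)) := by
  set V := volume (ball (0 : EuclideanSpace ℝ (Fin m)) 1)
  have hV₀ : V ≠ 0 := (measure_ball_pos _ _ one_pos).ne'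
  have hV : V ≠ ⊤ := measure_ball_lt_top.ne
  have hcone := (measure_mono (Ioo_smul_exists_le_abs_coord_subset (n := m + 1) c)).trans
    (measure_iUnion_fintype_le volume _)
  have hball := volume_preimage_splitCoord_le_volume_ball (m := m) 0 (δ := c / 2) (by linarith)
  rw [mul_div_cancel₀ c two_ne_zero] at hball
  calc _ ≤ (∑ _i : Fin (m + 1), ENNReal.ofReal 2 * ENNReal.ofReal (√(1 - c ^ 2) ^ m) * V) /
        (ENNReal.ofReal c * ENNReal.ofReal (√(1 - (c / 2) ^ 2) ^ m) * V) := by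
        rw [sphereUniform_apply (measurableSet_exists_le_abs_coord c)]
        exact ENNReal.div_le_div (hcone.trans (Finset.sum_le_sum fun i _ =>
          volume_closedBall_inter_coordCone_le i hc₀.le hc₁)) hball
    _ = _ := by
      rw [Finset.sum_const, Finset.card_univ, Fintype.card_fin, nsmul_eq_mul, ← mul_assoc,
        ENNReal.mul_div_mul_right _ _ hV₀ hV, ← ENNReal.ofReal_mul hc₀.le,
        ← ENNReal.ofReal_mul zero_le_two, ← ENNReal.ofReal_natCast,
        ← ENNReal.ofReal_mul (by positivity),
        ← ENNReal.ofReal_div_of_pos (mul_pos hc₀ (pow_pos (Real.sqrt_pos.2 (by nlinarith)) m))]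
      congr 1
      push_cast
      ring

theorem tendsto_succ_mul_pow_atTop_nhds_zero {q : ℝ} (hq₀ : 0 ≤ q) (hq₁ : q < 1) :
    Tendsto (fun m : ℕ => (m + 1 : ℝ) * q ^ m) atTop (𝓝 0) := by
  simpa [add_mul] using (tendsto_self_mul_const_pow_of_lt_one hq₀ hq₁).add
    (tendsto_pow_atTop_nhds_zero_of_lt_one hq₀ hq₁)

theorem tendsto_sphereUniform_exists_le_abs_coord {c : ℝ} (hc₀ : 0 < c) (hc₁ : c ≤ 1) :
    Tendsto (fun m : ℕ =>
        sphereUniform (m + 1) {θ | ∃ i, c ≤ |(θ : EuclideanSpace ℝ (Fin (m + 1))) i|})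
      atTop (𝓝 0) := by
  have hB : 0 < √(1 - (c / 2) ^ 2) := Real.sqrt_pos.2 (by nlinarith)
  have hAB : √(1 - c ^ 2) < √(1 - (c / 2) ^ 2) :=
    Real.sqrt_lt_sqrt (by nlinarith) (by nlinarith)
  have hbound := ENNReal.tendsto_ofReal ((tendsto_succ_mul_pow_atTop_nhds_zero
    (div_nonneg (Real.sqrt_nonneg _) hB.le) ((div_lt_one hB).2 hAB)).const_mul (2 / c))
  rw [mul_zero, ENNReal.ofReal_zero] at hbound
  exact tendsto_of_tendsto_of_tendsto_of_le_of_le tendsto_const_nhds hbound (fun _ => zero_le)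
    fun _ => sphereUniform_exists_le_abs_coord_le hc₀ hc₁

theorem sup_norm_sphere_tendsto_zero (c : ℝ) (hc : 0 < c) :
    Tendsto (fun n : ℕ => sphereUniform n
        {θ | ∀ i, |(θ : EuclideanSpace ℝ (Fin n)) i| < c})
      atTop (𝓝 (1 : ℝ≥0∞)) := by
  set c' := min c 1
  have hgood : Tendsto (fun m : ℕ =>
      sphereUniform (m + 1) {θ | ∀ i, |(θ : EuclideanSpace ℝ (Fin (m + 1))) i| < c'})
      atTop (𝓝 1) := by
    have h := ENNReal.Tendsto.sub tendsto_const_nhds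
      (tendsto_sphereUniform_exists_le_abs_coord (lt_min hc one_pos) (min_le_right c 1))
      (Or.inl ENNReal.one_ne_top)
    rw [tsub_zero] at h
    refine h.congr fun m => ?_
    rw [← prob_compl_eq_one_sub (measurableSet_exists_le_abs_coord c')]
    congr
    ext
    simp
  exact (tendsto_add_atTop_iff_nat 1).1 <| tendsto_of_tendsto_of_tendsto_of_le_of_le hgood
    tendsto_const_nhds (fun _ => measure_mono fun _ hθ i => (hθ i).trans_le (min_le_left c 1))
    fun _ => prob_le_one

end
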